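/- In any triangulation of a convex polygon with at least 4 vertices, there exists a diagonal that is close to the border, i.e., a diagonal whose two endpoints are at distance exactly 2 along the boundary. -/

import Mathlib

namespace CTA

/-- `x` lies strictly between `a` and `b` going anticlockwise around the `m`-gon. -/
def Btw (m : ℕ) (a x b : ZMod m) : Prop :=
  0 < (x - a).val ∧ (x - a).val < (b - a).val

/-- `p` is a diagonal of the convex `m`-gon: its endpoints are distinct and non-adjacent. -/
def IsPolyDiag (m : ℕ) (p : Sym2 (ZMod m)) : Prop :=
  ∀ a b : ZMod m, p = s(a, b) → 2 ≤ (b - a).val ∧ 2 ≤ (a - b).val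

/-- Two diagonals cross (intersect in an interior point of both). -/
def Crosses (m : ℕ) (p q : Sym2 (ZMod m)) : Prop :=
  ∃ a b c d : ZMod m, p = s(a, b) ∧ q = s(c, d) ∧ Btw m a c b ∧ Btw m b d a

/-- A triangulation: a maximal set of pairwise non-crossing diagonals. -/
def IsTriangulation (m : ℕ) (Δ : Set (Sym2 (ZMod m))) : Prop :=
  (∀ p ∈ Δ, IsPolyDiag m p) ∧
  (∀ p ∈ Δ, ∀ q ∈ Δ, ¬ Crosses m p q) ∧
  ∀ Δ' : Set (Sym2 (ZMod m)), Δ ⊆ Δ' → (∀ p ∈ Δ', IsPolyDiag m p) →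
    (∀ p ∈ Δ', ∀ q ∈ Δ', ¬ Crosses m p q) → Δ' = Δ

/-- A diagonal is close to the border if its endpoints are at boundary distance exactly 2. -/
def CloseBorder (m : ℕ) (p : Sym2 (ZMod m)) : Prop :=
  ∃ a b : ZMod m, p = s(a, b) ∧ min (b - a).val (a - b).val = 2

/-- Rotation of a triangulation by `k` vertices. -/
def rotate (m : ℕ) (k : ZMod m) (Δ : Set (Sym2 (ZMod m))) : Set (Sym2 (ZMod m)) :=
  Sym2.map (· + k) '' Δ

/-- The orbit of a triangulation under the rotation action of `ZMod m`. -/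
def rotOrbit (m : ℕ) (Δ : Set (Sym2 (ZMod m))) : Set (Set (Sym2 (ZMod m))) :=
  {Δ' | ∃ k : ZMod m, Δ' = rotate m k Δ}

/-- The number of orbits of the rotation action on triangulations of the `m`-gon. -/
noncomputable def numOrbits (m : ℕ) : ℕ :=
  Nat.card {O : Set (Set (Sym2 (ZMod m))) // ∃ Δ, IsTriangulation m Δ ∧ O = rotOrbit m Δ}

/-- The `n`-th Catalan number `(2n)!/((n+1)!·n!)`. -/
def catalanC (n : ℕ) : ℕ :=
  Nat.factorial (2 * n) / (Nat.factorial (n + 1) * Nat.factorial n)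

/-- The diagonal close to the border cutting off the vertex `v`. -/
def cutDiag (m : ℕ) (v : ZMod m) : Sym2 (ZMod m) := s(v - 1, v + 1)

/-- Deleting the vertex `v` from the `(m+1)`-gon: the order-preserving relabelling of the
remaining vertices by `ZMod m`. -/
def delVtx (m : ℕ) (v : ZMod (m + 1)) (x : ZMod (m + 1)) : ZMod m :=
  if x.val < v.val then (x.val : ZMod m) else ((x.val - 1 : ℕ) : ZMod m)

/-- Inserting a new vertex on the border edge between `a` and `a+1`:
the induced relabelling of old vertices into `ZMod (m+1)`. -/
def insVtx (m : ℕ) (a : ZMod m) (x : ZMod m) : ZMod (m + 1) :=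
  if x.val ≤ a.val then (x.val : ZMod (m + 1)) else ((x.val + 1 : ℕ) : ZMod (m + 1))

/-- Factoring out the close-to-the-border diagonal cutting off the vertex `v`:
the diagonal becomes a border edge of the smaller polygon, all other diagonals unchanged. -/
def contract (m : ℕ) (v : ZMod (m + 1)) (Δ : Set (Sym2 (ZMod (m + 1)))) :
    Set (Sym2 (ZMod m)) :=
  Sym2.map (delVtx m v) '' (Δ \ {cutDiag (m + 1) v})

/-- An edge of the triangulated polygon: a diagonal of `Δ` or a border edge. -/
def IsEdge (m : ℕ) (Δ : Set (Sym2 (ZMod m))) (p : Sym2 (ZMod m)) : Prop :=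
  p ∈ Δ ∨ ∃ a : ZMod m, p = s(a, a + 1)

/-- The arrow relation of the quiver `Q_Δ`: an arrow `p → q` when the diagonals `p` and `q`
bound a common triangle of `Δ` and `q` is obtained from `p` by anticlockwise rotation about
their common endpoint. -/
def Arrow (m : ℕ) (Δ : Set (Sym2 (ZMod m))) (p q : Sym2 (ZMod m)) : Prop :=
  p ∈ Δ ∧ q ∈ Δ ∧
    ∃ a b c : ZMod m, p = s(a, b) ∧ q = s(a, c) ∧ IsEdge m Δ s(b, c) ∧ Btw m b c a

/-- Fomin–Zelevinsky mutation of an arrow relation (quiver with no loops, no 2-cycles and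
no multiple arrows) at the vertex `k`. -/
def mutArrow (m : ℕ) (A : Sym2 (ZMod m) → Sym2 (ZMod m) → Prop) (k p q : Sym2 (ZMod m)) :
    Prop :=
  (p = k ∧ A q k) ∨
  (p ≠ k ∧ q = k ∧ A k p) ∨
  (p ≠ k ∧ q ≠ k ∧
    ((A p k ∧ A k q ∧ ¬ A q p) ∨ (A p q ∧ ¬ (A q k ∧ A k p))))


/-! A diagonal `s(a, b)` of a non-crossing family that minimises the anticlockwise length
`(b - a).val` leaves the vertex `a + 1` untouched: a diagonal at `a + 1` either crosses
`s(a, b)` or is shorter. At a vertex `v` touched by no diagonal, `s(v - 1, v + 1)` crosses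
nothing, so by maximality it belongs to the triangulation, and it is close to the border. -/

section

variable {m : ℕ} {Δ : Set (Sym2 (ZMod m))}

section ZModArith

variable [NeZero m]

/-- With positions measured anticlockwise from `a`, the anticlockwise distance from `x` to `y`
is the difference of positions, or that difference plus `m` if `y` comes before `x`. -/
theorem val_sub_add_val_sub (a x y : ZMod m) :
    (x - a).val ≤ (y - a).val ∧ (x - a).val + (y - x).val = (y - a).val ∨
      (y - a).val < (x - a).val ∧ (x - a).val + (y - x).val = (y - a).val + m := by
  have hsum : (x - a) + (y - x) = y - a := by ring
  have hyx := ZMod.val_lt (y - x)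
  rcases lt_or_ge ((x - a).val + (y - x).val) m with hlt | hle
  · have := ZMod.val_add_of_lt hlt
    rw [hsum] at this
    left; omega
  · have := ZMod.val_add_val_of_le hle
    rw [hsum] at this
    have := ZMod.val_lt (y - a)
    right; omega

theorem val_sub_add_val_sub_comm {a b : ZMod m} (h : a ≠ b) :
    (b - a).val + (a - b).val = m := by
  have hpos : (b - a).val ≠ 0 := by
    rwa [Ne, ZMod.val_eq_zero, sub_eq_zero, eq_comm]
  have := val_sub_add_val_sub a b a
  simp only [sub_self, ZMod.val_zero] at this
  omega

theorem eq_of_val_sub_eq {a x y : ZMod m} (h : (x - a).val = (y - a).val) : x = y :=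
  sub_left_injective (ZMod.val_injective _ h)

end ZModArith

theorem not_crosses_self (p : Sym2 (ZMod m)) : ¬ Crosses m p p := by
  rintro ⟨a, b, c, d, rfl, hq, ⟨hc, hcb⟩, -⟩
  rcases Sym2.eq_iff.1 hq with ⟨rfl, -⟩ | ⟨rfl, rfl⟩
  · simp at hc
  · simp at hcb

theorem Crosses.symm [NeZero m] {p q : Sym2 (ZMod m)} (h : Crosses m p q) : Crosses m q p := by
  obtain ⟨a, b, c, d, rfl, rfl, ⟨hc0, hcb⟩, ⟨hd0, hda⟩⟩ := h
  refine ⟨c, d, b, a, rfl, Sym2.eq_swap, ?_⟩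
  have hcb' := val_sub_add_val_sub a c b
  have hbd := val_sub_add_val_sub a b d
  have hba := val_sub_add_val_sub a b a
  have hcd := val_sub_add_val_sub a c d
  have hda' := val_sub_add_val_sub a d a
  have hdc := val_sub_add_val_sub a d c
  simp only [sub_self, ZMod.val_zero] at hba hda'
  constructor <;> constructor <;> omega

theorem IsTriangulation.mem_of_forall_not_crosses [NeZero m] (hΔ : IsTriangulation m Δ)
    {p : Sym2 (ZMod m)} (hp : IsPolyDiag m p) (hnc : ∀ q ∈ Δ, ¬ Crosses m p q) : p ∈ Δ := by
  obtain ⟨hdiag, hcr, hmax⟩ := hΔ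
  have hins : insert p Δ = Δ := by
    refine hmax _ (Set.subset_insert _ _) ?_ ?_
    · rintro q (rfl | hq)
      exacts [hp, hdiag q hq]
    · rintro q (rfl | hq) r (rfl | hr)
      exacts [not_crosses_self _, hnc r hr, fun h => hnc q hq h.symm, hcr q hq r hr]
  exact hins ▸ Set.mem_insert p Δ

theorem val_succ_sub_pred (hm : 2 < m) (v : ZMod m) : (v + 1 - (v - 1)).val = 2 := by
  rw [show v + 1 - (v - 1) = 2 by ring]
  exact ZMod.val_ofNat_of_lt hm

section CutDiag

variable [NeZero m]

theorem val_pred_sub_succ (hm : 2 < m) (v : ZMod m) : (v - 1 - (v + 1)).val = m - 2 := by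
  have hne : v - 1 ≠ v + 1 := fun h => by
    have := val_succ_sub_pred hm v
    rw [h, sub_self, ZMod.val_zero] at this
    omega
  have := val_sub_add_val_sub_comm hne
  rw [val_succ_sub_pred hm] at this
  omega

theorem isPolyDiag_cutDiag (hm : 4 ≤ m) (v : ZMod m) : IsPolyDiag m (cutDiag m v) := by
  intro x y hxy
  have h2 := val_succ_sub_pred (by omega) v
  have hm2 := val_pred_sub_succ (by omega) v
  rcases Sym2.eq_iff.1 hxy with ⟨rfl, rfl⟩ | ⟨rfl, rfl⟩ <;> omega

theorem closeBorder_cutDiag (hm : 4 ≤ m) (v : ZMod m) : CloseBorder m (cutDiag m v) :=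
  ⟨v - 1, v + 1, rfl, by rw [val_succ_sub_pred (by omega), val_pred_sub_succ (by omega)]; omega⟩

theorem eq_of_btw_pred_succ (hm : 2 < m) {v c : ZMod m} (h : Btw m (v - 1) c (v + 1)) :
    c = v := by
  obtain ⟨hc0, hc2⟩ := h
  rw [val_succ_sub_pred hm] at hc2
  have hv : (v - (v - 1)).val = 1 := by
    rw [sub_sub_cancel]
    exact ZMod.val_one'' (by omega)
  exact eq_of_val_sub_eq (a := v - 1) (by omega)

theorem exists_eq_mk_of_crosses_cutDiag (hm : 2 < m) {v : ZMod m} {q : Sym2 (ZMod m)}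
    (h : Crosses m (cutDiag m v) q) : ∃ d, q = s(v, d) := by
  obtain ⟨a, b, c, d, hp, rfl, hc, hd⟩ := h
  rcases Sym2.eq_iff.1 hp with ⟨rfl, rfl⟩ | ⟨rfl, rfl⟩
  · exact ⟨d, by rw [eq_of_btw_pred_succ hm hc]⟩
  · exact ⟨c, by rw [eq_of_btw_pred_succ hm hd, Sym2.eq_swap]⟩

theorem IsTriangulation.cutDiag_mem (hm : 4 ≤ m) (hΔ : IsTriangulation m Δ) {v : ZMod m}
    (hv : ∀ d, s(v, d) ∉ Δ) : cutDiag m v ∈ Δ :=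
  hΔ.mem_of_forall_not_crosses (isPolyDiag_cutDiag hm v) fun q hq hcr => by
    obtain ⟨d, rfl⟩ := exists_eq_mk_of_crosses_cutDiag (by omega) hcr
    exact hv d hq

end CutDiag

theorem val_sub_lt_of_not_crosses [NeZero m] {a b d : ZMod m} (hab : IsPolyDiag m s(a, b))
    (hd : IsPolyDiag m s(a + 1, d)) (hnc : ¬ Crosses m s(a, b) s(a + 1, d)) :
    (d - (a + 1)).val < (b - a).val := by
  obtain ⟨hb, hb'⟩ := hab a b rfl
  obtain ⟨hd1, hd2⟩ := hd (a + 1) d rfl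
  have h1 : (a + 1 - a).val = 1 := by
    rw [add_sub_cancel_left]
    exact ZMod.val_one'' (by have := ZMod.val_lt (b - a); omega)
  have hd' := val_sub_add_val_sub a (a + 1) d
  have hd'' := val_sub_add_val_sub a d (a + 1)
  have hbd := val_sub_add_val_sub a b d
  have hba := val_sub_add_val_sub a b a
  simp only [sub_self, ZMod.val_zero] at hba
  by_contra! hge
  exact hnc ⟨a, b, a + 1, d, rfl, rfl, ⟨by omega, by omega⟩, ⟨by omega, by omega⟩⟩

theorem exists_isolated_vertex [NeZero m] (hdiag : ∀ p ∈ Δ, IsPolyDiag m p)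
    (hcr : ∀ p ∈ Δ, ∀ q ∈ Δ, ¬ Crosses m p q) : ∃ v : ZMod m, ∀ d, s(v, d) ∉ Δ := by
  rcases Δ.eq_empty_or_nonempty with rfl | ⟨p, hp⟩
  · exact ⟨0, fun _ => id⟩
  obtain ⟨⟨x, y⟩, rfl⟩ := Sym2.mk_surjective p
  obtain ⟨⟨a, b⟩, hab, hmin⟩ := Set.exists_min_image {e : ZMod m × ZMod m | s(e.1, e.2) ∈ Δ}
    (fun e => (e.2 - e.1).val) (Set.toFinite _) ⟨(x, y), hp⟩
  refine ⟨a + 1, fun d hd => ?_⟩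
  exact (val_sub_lt_of_not_crosses (hdiag _ hab) (hdiag _ hd) (hcr _ hab _ hd)).not_ge
    (hmin (a + 1, d) hd)

end

/-- Any triangulation of a convex polygon with at least `4` vertices contains a diagonal
close to the border. -/
theorem exists_close_border (m : ℕ) (hm : 4 ≤ m) (Δ : Set (Sym2 (ZMod m)))
    (hΔ : IsTriangulation m Δ) : ∃ p ∈ Δ, CloseBorder m p := by
  have : NeZero m := ⟨by omega⟩
  obtain ⟨v, hv⟩ := exists_isolated_vertex hΔ.1 hΔ.2.1
  exact ⟨cutDiag m v, hΔ.cutDiag_mem hm hv, closeBorder_cutDiag hm v⟩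

end CTA
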